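/- arXiv:1705.08998 — 4 statements merged into one kernel-verified Lean document; each statement's English description precedes it below -/
import Mathlib

section
/- For every n ∈ ℕ there exists a constant f'(n) = n·f(n) such that the following holds. Let G = (A, B) be a bipartite graph with A = {x_1,…,x_n}. Then there exists W ⊆ B with |W| ≤ f'(n) such that the induced bipartite graph G' = G[A, B \ W] satisfies: for all i, j, if d_G(x_i) > d_G(x_j) then d_G(x_i) − d_{G'}(x_i) > d_G(x_j) − d_{G'}(x_j). -/
/-!
Group the vertices of `B` by their neighbourhood in `A`. The degrees in `G`, and the degree losses
caused by deleting `W`, only depend on the vector counting the vertices of each neighbourhood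
type, a point of `ℕ ^ (2 ^ A)`. Among the count vectors below the one of `B` that still strictly
separate every pair of vertices separated by the degrees of `G`, take a minimal one and realise it
by a set `W`. Minimal vectors with a given separation pattern form an antichain, which is finite
by Dickson's lemma; as there are finitely many patterns, their sizes are bounded in terms of `n`.
-/

open Finset

section WellQuasiOrder

variable {α κ : Type*} [PartialOrder α] [WellQuasiOrderedLE α]

theorem WellQuasiOrderedLE.finite_setOf_minimal (P : α → Prop) : {x | Minimal P x}.Finite :=
  WellQuasiOrderedLE.finite_of_isAntichain (setOfPred_minimal_antichain P)

theorem WellQuasiOrderedLE.exists_bound_forall_exists_le [Finite κ] (P : κ → α → Prop)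
    (size : α → ℕ) : ∃ B, ∀ k a, P k a → ∃ w ≤ a, P k w ∧ size w ≤ B := by
  let F := (Set.finite_iUnion fun k => finite_setOf_minimal (P k)).toFinset
  refine ⟨F.sup size, fun k a ha => ?_⟩
  obtain ⟨w, hwa, hw⟩ := exists_minimal_le_of_wellFoundedLT (P k) a ha
  have hwF : w ∈ F := by simpa [F] using ⟨k, hw⟩
  exact ⟨w, hwa, hw.prop, le_sup hwF⟩

end WellQuasiOrder

section NeighborhoodCount

variable {ι β : Type*} [Fintype ι] [DecidableEq ι]

def leftNeighbors (E : ι → β → Bool) (b : β) : Finset ι := {i | E i b}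

def neighborhoodCount (E : ι → β → Bool) (u : Finset β) (S : Finset ι) : ℕ :=
  #{b ∈ u | leftNeighbors E b = S}

def countDegree (x : Finset ι → ℕ) (i : ι) : ℕ := ∑ S with i ∈ S, x S

theorem card_filter_eq_countDegree (E : ι → β → Bool) (u : Finset β) (i : ι) :
    #{b ∈ u | E i b} = countDegree (neighborhoodCount E u) i := by
  rw [countDegree, card_eq_sum_card_fiberwise (f := leftNeighbors E) (t := {S | i ∈ S})
    fun b hb => by simpa [leftNeighbors] using (mem_filter.mp hb).2]
  refine sum_congr rfl fun S hS => ?_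
  rw [neighborhoodCount, filter_filter]
  refine congrArg card (filter_congr fun b _ => ?_)
  constructor
  · exact And.right
  · rintro rfl
    simpa [leftNeighbors] using hS

theorem exists_neighborhoodCount_eq [Fintype β] [DecidableEq β] (E : ι → β → Bool) (w : Finset ι → ℕ)
    (hw : w ≤ neighborhoodCount E univ) :
    ∃ W : Finset β, neighborhoodCount E W = w ∧ #W ≤ ∑ S, w S := by
  choose t ht_sub ht_card using fun S => exists_subset_card_eq (hw S)
  have ht_type : ∀ S, ∀ b ∈ t S, leftNeighbors E b = S := fun S b hb =>
    (mem_filter.mp (ht_sub S hb)).2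
  refine ⟨univ.biUnion t, funext fun S => ?_, ?_⟩
  · rw [neighborhoodCount, ← ht_card S]
    congr 1
    ext b
    simp only [mem_filter, mem_biUnion, mem_univ, true_and]
    constructor
    · rintro ⟨⟨T, hbT⟩, rfl⟩
      rwa [ht_type T b hbT]
    · exact fun hb => ⟨⟨S, hb⟩, ht_type S b hb⟩
  · exact card_biUnion_le.trans (sum_le_sum fun S _ => (ht_card S).le)

end NeighborhoodCount

/-- For every `n` there is a constant `f'` such that in every bipartite graph
with parts `A = {x_0,…,x_{n-1}}` (modelled as `Fin n`) and `B` (a finite type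
`β`, with adjacency `E`), one can delete a set `W ⊆ B` of at most `f'` vertices
so that the degree losses of the vertices of `A` are strictly monotone in their
original degrees: if `d_G(x i) > d_G(x j)` then
`d_G(x i) - d_{G'}(x i) > d_G(x j) - d_{G'}(x j)`, where `G' = G[A, B \ W]`
(so the loss of `x` is its number of neighbours in `W`). -/
theorem stmt_3 (n : ℕ) :
    ∃ f' : ℕ, ∀ (β : Type) (_ : Fintype β) (_ : DecidableEq β)
      (E : Fin n → β → Bool),
      ∃ W : Finset β, W.card ≤ f' ∧
        ∀ i j : Fin n,
          (univ.filter fun b => E j b).card < (univ.filter fun b => E i b).card →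
          (W.filter fun b => E j b).card < (W.filter fun b => E i b).card := by
  obtain ⟨B, hB⟩ := WellQuasiOrderedLE.exists_bound_forall_exists_le
    (fun (r : Fin n → Fin n → Prop) (x : Finset (Fin n) → ℕ) =>
      ∀ i j, r i j → countDegree x j < countDegree x i)
    (fun x => ∑ S, x S)
  refine ⟨B, fun β _ _ E => ?_⟩
  set a := neighborhoodCount E univ
  obtain ⟨w, hwa, hw_sep, hw_size⟩ :=
    hB (fun i j => countDegree a j < countDegree a i) a fun _ _ h => h
  obtain ⟨W, hW, hW_card⟩ := exists_neighborhoodCount_eq E w hwa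
  refine ⟨W, hW_card.trans hw_size, fun i j hij => ?_⟩
  simp only [card_filter_eq_countDegree, hW] at hij ⊢
  exact hw_sep i j hij
end

section
/- If G is a graph on n vertices with maximum degree Δ, then for every positive integer k, G contains an induced subgraph H' on at least n − k·√Δ vertices such that the difference between the maximum degree of H' and the k-th largest degree in H' is at most √Δ. -/
open Finset

variable {V : Type*} [Fintype V] [DecidableEq V]

/-- The degree of `v` in the subgraph of `G` induced on the vertex set `s`:
the number of neighbours of `v` lying in `s`. -/
def degIn (G : SimpleGraph V) [DecidableRel G.Adj] (s : Finset V) (v : V) : ℕ :=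
  (s.filter fun u => G.Adj v u).card

/-- The maximum degree of the subgraph of `G` induced on `s`. -/
def maxDegIn (G : SimpleGraph V) [DecidableRel G.Adj] (s : Finset V) : ℕ :=
  s.sup (degIn G s)

/-- The `k`-th largest degree of the subgraph of `G` induced on `s`
(the entry at position `|s| - k` of the increasingly sorted degree sequence). -/
def kthLargestDeg (G : SimpleGraph V) [DecidableRel G.Adj] (s : Finset V) (k : ℕ) : ℕ :=
  (Multiset.sort (s.val.map (degIn G s)) (· ≤ ·)).getD (s.card - k) 0

/-- `r_k` of the subgraph of `G` induced on `s`: the difference between its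
maximum degree and its `k`-th largest degree. -/
def rk (G : SimpleGraph V) [DecidableRel G.Adj] (s : Finset V) (k : ℕ) : ℕ :=
  maxDegIn G s - kthLargestDeg G s k

/-
Let `c = ⌊√Δ⌋`. While `r_k(H) > c`, delete the fewer than `k` vertices of `H` whose degree
exceeds its `k`-th largest degree: every remaining degree is then at most that `k`-th largest
degree, so the maximum degree drops by more than `c`. Since the maximum degree starts at most
`Δ < (c + 1)²`, at most `c` rounds happen, removing fewer than `k·c ≤ k·√Δ` vertices.
-/

lemma List.Pairwise.countP_getElem_lt_le {α : Type*} [LinearOrder α] {l : List α}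
    (hl : l.Pairwise (· ≤ ·)) {j : ℕ} (hj : j < l.length) :
    l.countP (fun d => l[j] < d) ≤ l.length - (j + 1) := by
  have htake : (l.take (j + 1)).countP (fun d => l[j] < d) = 0 := by
    rw [List.countP_eq_zero]
    intro a ha
    obtain ⟨i, hi, rfl⟩ := List.mem_take_iff_getElem.mp ha
    have hij : i ≤ j := by omega
    rcases hij.eq_or_lt with rfl | hlt
    · simp
    · simpa using List.pairwise_iff_getElem.mp hl i j (by omega) hj hlt
  calc l.countP (fun d => l[j] < d)
      = (l.take (j + 1)).countP (fun d => l[j] < d)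
        + (l.drop (j + 1)).countP (fun d => l[j] < d) := by
        rw [← List.countP_append, List.take_append_drop]
    _ ≤ (l.drop (j + 1)).length := by rw [htake, zero_add]; exact List.countP_le_length
    _ = l.length - (j + 1) := List.length_drop

section InducedDegrees

omit [Fintype V] [DecidableEq V]

variable (G : SimpleGraph V) [DecidableRel G.Adj]

lemma degIn_mono {s s' : Finset V} (h : s' ⊆ s) (v : V) : degIn G s' v ≤ degIn G s v :=
  card_le_card (filter_subset_filter _ h)

lemma degIn_le_degree [Fintype V] (s : Finset V) (v : V) : degIn G s v ≤ G.degree v := by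
  rw [← G.card_neighborFinset_eq_degree]
  exact card_le_card fun u hu => by simpa using (mem_filter.mp hu).2

lemma maxDegIn_le_maxDegree [Fintype V] (s : Finset V) : maxDegIn G s ≤ G.maxDegree :=
  Finset.sup_le fun v _ => (degIn_le_degree G s v).trans (G.degree_le_maxDegree v)

def aboveKthLargest (s : Finset V) (k : ℕ) : Finset V :=
  s.filter fun v => kthLargestDeg G s k < degIn G s v

lemma card_aboveKthLargest_lt (s : Finset V) {k : ℕ} (hk : 0 < k) :
    (aboveKthLargest G s k).card < k := by
  rcases s.eq_empty_or_nonempty with rfl | hs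
  · simpa [aboveKthLargest] using hk
  set l := Multiset.sort (s.val.map (degIn G s)) (· ≤ ·) with hl
  have hlen : l.length = s.card := by rw [hl, Multiset.length_sort, Multiset.card_map]; rfl
  have hj : s.card - k < l.length := by have := hs.card_pos; omega
  have hkth : kthLargestDeg G s k = l[s.card - k] := List.getD_eq_getElem l 0 hj
  have hcount : (aboveKthLargest G s k).card = l.countP (fun d => l[s.card - k] < d) := by
    have hmap : (aboveKthLargest G s k).card
        = (s.val.map (degIn G s)).countP (fun d => kthLargestDeg G s k < d) := by
      rw [Multiset.countP_map]
      rfl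
    rw [hmap, hkth, ← Multiset.sort_eq (s.val.map (degIn G s)) (· ≤ ·), ← hl,
      Multiset.coe_countP]
  have hsorted : l.Pairwise (· ≤ ·) := Multiset.pairwise_sort _ _
  have hle := hsorted.countP_getElem_lt_le hj
  have hpos := hs.card_pos
  omega

lemma maxDegIn_sdiff_aboveKthLargest_le [DecidableEq V] (s : Finset V) (k : ℕ) :
    maxDegIn G (s \ aboveKthLargest G s k) ≤ kthLargestDeg G s k := by
  refine Finset.sup_le fun v hv => ?_
  obtain ⟨hvs, hvT⟩ := mem_sdiff.mp hv
  have : ¬ kthLargestDeg G s k < degIn G s v := fun h => hvT (mem_filter.mpr ⟨hvs, h⟩)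
  exact (degIn_mono G sdiff_subset v).trans (not_lt.mp this)

/-- `t` is the number of rounds of deleting `aboveKthLargest`. -/
lemma exists_rk_le_of_deleting_rounds [DecidableEq V] {k : ℕ} (hk : 0 < k) (c : ℕ)
    (s : Finset V) :
    ∃ s' : Finset V, ∃ t : ℕ,
      rk G s' k ≤ c ∧ s.card ≤ s'.card + k * t ∧ t * (c + 1) ≤ maxDegIn G s := by
  induction hm : maxDegIn G s using Nat.strong_induction_on generalizing s with
  | _ m ih =>
  by_cases hr : rk G s k ≤ c
  · exact ⟨s, 0, hr, by omega, by omega⟩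
  obtain ⟨s₁, hs₁⟩ : ∃ s₁, s₁ = s \ aboveKthLargest G s k := ⟨_, rfl⟩
  have hdrop : maxDegIn G s₁ + (c + 1) ≤ m := by
    have hle := hs₁ ▸ maxDegIn_sdiff_aboveKthLargest_le G s k
    rw [rk] at hr
    omega
  obtain ⟨s', t, hrk, hcard, hmax⟩ := ih _ (by omega) s₁ rfl
  have hcard₁ : s.card ≤ s₁.card + k := by
    have hlt := card_aboveKthLargest_lt G s hk
    have hle := hs₁ ▸ le_card_sdiff (aboveKthLargest G s k) s
    omega
  exact ⟨s', t + 1, hrk, by rw [mul_add_one]; omega, by rw [add_one_mul]; omega⟩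

end InducedDegrees

/-- Every graph `G` on `n` vertices with maximum degree `Δ` contains an induced
subgraph `H'` on at least `n - k·√Δ` vertices with `r_k(H') ≤ √Δ`. -/
theorem stmt_4 (k : ℕ) (hk : 0 < k) (G : SimpleGraph V) [DecidableRel G.Adj] :
    ∃ s : Finset V,
      (Fintype.card V : ℝ) - k * Real.sqrt (G.maxDegree) ≤ s.card ∧
      (rk G s k : ℝ) ≤ Real.sqrt (G.maxDegree) := by
  set c := Nat.sqrt G.maxDegree
  obtain ⟨s, t, hrk, hcard, hmax⟩ := exists_rk_le_of_deleting_rounds G hk c univ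
  have htc : t ≤ c := by
    have hlt := (hmax.trans (maxDegIn_le_maxDegree G univ)).trans_lt (Nat.lt_succ_sqrt _)
    exact Nat.le_of_lt_succ (Nat.lt_of_mul_lt_mul_right hlt)
  have hcsqrt : (c : ℝ) ≤ Real.sqrt G.maxDegree := Real.nat_sqrt_le_real_sqrt
  have hcardV : (Fintype.card V : ℝ) ≤ s.card + k * c := by
    rw [← card_univ]
    exact_mod_cast hcard.trans (by gcongr)
  have hkc : (k : ℝ) * c ≤ k * Real.sqrt G.maxDegree :=
    mul_le_mul_of_nonneg_left hcsqrt (Nat.cast_nonneg k)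
  exact ⟨s, by linarith, (Nat.cast_le.mpr hrk).trans hcsqrt⟩
end

section
/- For positive integers r, d, q, any sequence of n ≥ (⌈q/r⌉ + 2)(2rd + 1)^d vectors in [−r, r]^d ∩ ℤ^d whose sum z lies in [−q, q]^d contains a subsequence of length at most (⌈q/r⌉ + 2)(2rd + 1)^d whose sum is also z. -/
open Finset

/-- A nonzero vector supported on `F`, orthogonal to the `d+1` natural constraints. -/
lemma exists_kernel_vec {ι : Type*} [DecidableEq ι] {d : ℕ} (u : ι → Fin d → ℝ)
    (F : Finset ι) (hF : d + 2 ≤ F.card) :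
    ∃ ν : ι → ℝ, (∀ i, i ∉ F → ν i = 0) ∧ (∃ i ∈ F, ν i ≠ 0) ∧
      (∑ i ∈ F, ν i = 0) ∧ (∀ j, ∑ i ∈ F, ν i * u i j = 0) := by
  classical
  let L : (↥F → ℝ) →ₗ[ℝ] ((Fin d → ℝ) × ℝ) :=
    { toFun := fun g => (fun j => ∑ i : ↥F, g i * u i.1 j, ∑ i : ↥F, g i)
      map_add' := by
        intro g h
        ext j
        · simp [add_mul, Finset.sum_add_distrib]
        · simp [Finset.sum_add_distrib]
      map_smul' := by
        intro c g
        ext j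
        · simp [Finset.mul_sum, mul_assoc]
        · simp [Finset.mul_sum] }
  have hnotinj : ¬ Function.Injective L := by
    intro hinj
    have h1 := LinearMap.finrank_le_finrank_of_injective hinj
    rw [Module.finrank_pi, Module.finrank_prod, Module.finrank_pi, Module.finrank_self,
      Fintype.card_coe, Fintype.card_fin] at h1
    omega
  obtain ⟨g1, g2, hg12, hgne⟩ := Function.not_injective_iff.mp hnotinj
  have hker : L (g1 - g2) = 0 := by rw [map_sub, hg12, sub_self]
  have hgsub : g1 - g2 ≠ 0 := sub_ne_zero.mpr hgne
  set gh : ↥F → ℝ := g1 - g2 with hgh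
  refine ⟨fun i => if h : i ∈ F then gh ⟨i, h⟩ else 0, ?_, ?_, ?_, ?_⟩
  · intro i hi
    dsimp only
    rw [dif_neg hi]
  · obtain ⟨x, hx⟩ := Function.ne_iff.mp hgsub
    refine ⟨x.1, x.2, ?_⟩
    dsimp only
    rw [dif_pos x.2]
    simpa using hx
  · have h2 : (L gh).2 = 0 := by rw [hker]; rfl
    calc (∑ i ∈ F, if h : i ∈ F then gh ⟨i, h⟩ else 0)
        = ∑ x ∈ F.attach, (if h : (x : ι) ∈ F then gh ⟨x, h⟩ else 0) :=
          (Finset.sum_attach _ _).symm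
      _ = ∑ x ∈ F.attach, gh x := Finset.sum_congr rfl (fun x _ => by rw [dif_pos x.2])
      _ = (L gh).2 := by
          show _ = ∑ i : ↥F, gh i
          rw [Finset.univ_eq_attach]
      _ = 0 := h2
  · intro j
    have h2 : (L gh).1 j = 0 := by rw [hker]; rfl
    calc (∑ i ∈ F, (if h : i ∈ F then gh ⟨i, h⟩ else 0) * u i j)
        = ∑ x ∈ F.attach, (if h : (x : ι) ∈ F then gh ⟨x, h⟩ else 0) * u x.1 j :=
          (Finset.sum_attach _ _).symm
      _ = ∑ x ∈ F.attach, gh x * u x.1 j :=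
          Finset.sum_congr rfl (fun x _ => by rw [dif_pos x.2])
      _ = (L gh).1 j := by
          show _ = ∑ i : ↥F, gh i * u i.1 j
          rw [Finset.univ_eq_attach]
      _ = 0 := h2

/-- Perturbation step: from a valid weight function with the invariants, we can find
an element of `A` that can be dropped (weight zero achievable). -/
lemma peel_aux {ι : Type*} [DecidableEq ι] {d : ℕ} {u : ι → Fin d → ℝ}
    {A : Finset ι} {lam : ι → ℝ}
    (hA : d + 1 ≤ A.card)
    (h01 : ∀ i ∈ A, 0 ≤ lam i ∧ lam i ≤ 1)
    (hs : ∑ i ∈ A, lam i = (A.card : ℝ) - d)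
    (hz : ∀ j, ∑ i ∈ A, lam i * u i j = 0) :
    ∃ a ∈ A, ∃ mu : ι → ℝ,
      (∀ i ∈ A, 0 ≤ mu i ∧ mu i ≤ 1) ∧
      (∑ i ∈ A, mu i = (A.card : ℝ) - (d + 1)) ∧
      (∀ j, ∑ i ∈ A, mu i * u i j = 0) ∧ mu a = 0 := by
  classical
  set Q : (ι → ℝ) → Prop := fun μ =>
    (∀ i ∈ A, 0 ≤ μ i ∧ μ i ≤ 1) ∧ (∑ i ∈ A, μ i = (A.card : ℝ) - (d + 1)) ∧
    (∀ j, ∑ i ∈ A, μ i * u i j = 0) with hQdef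
  have hdA : (d : ℝ) + 1 ≤ (A.card : ℝ) := by exact_mod_cast hA
  -- initial point
  have hQ0 : Q (fun i => lam i * (((A.card : ℝ) - (d + 1)) / ((A.card : ℝ) - d))) := by
    have hden : (0 : ℝ) < (A.card : ℝ) - d := by linarith
    have hrat0 : 0 ≤ ((A.card : ℝ) - (d + 1)) / ((A.card : ℝ) - d) :=
      div_nonneg (by linarith) (le_of_lt hden)
    have hrat1 : ((A.card : ℝ) - (d + 1)) / ((A.card : ℝ) - d) ≤ 1 := by
      rw [div_le_one hden]; linarith
    refine ⟨?_, ?_, ?_⟩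
    · intro i hi
      constructor
      · exact mul_nonneg (h01 i hi).1 hrat0
      · calc lam i * (((A.card : ℝ) - (d + 1)) / ((A.card : ℝ) - d))
            ≤ 1 * 1 := mul_le_mul (h01 i hi).2 hrat1 hrat0 zero_le_one
          _ = 1 := mul_one 1
    · rw [← Finset.sum_mul, hs]
      field_simp
    · intro j
      have : ∀ i ∈ A, lam i * (((A.card : ℝ) - (d + 1)) / ((A.card : ℝ) - d)) * u i j
          = (((A.card : ℝ) - (d + 1)) / ((A.card : ℝ) - d)) * (lam i * u i j) := by
        intro i _; ring
      rw [Finset.sum_congr rfl this, ← Finset.mul_sum, hz j, mul_zero]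
  -- the descent step
  have step : ∀ μ : ι → ℝ, Q μ → (∀ i ∈ A, μ i ≠ 0) →
      ∃ μ' : ι → ℝ, Q μ' ∧
        (A.filter (fun i => 0 < μ' i ∧ μ' i < 1)).card
          < (A.filter (fun i => 0 < μ i ∧ μ i < 1)).card := by
    intro μ hQμ hnz
    obtain ⟨hb, hsμ, hzμ⟩ := hQμ
    set F := A.filter (fun i => 0 < μ i ∧ μ i < 1) with hFdef
    have hFsub : F ⊆ A := Finset.filter_subset _ _
    have hFpos : ∀ i ∈ F, 0 < μ i ∧ μ i < 1 := fun i hi => (Finset.mem_filter.mp hi).2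
    have hone : ∀ i ∈ A, i ∉ F → μ i = 1 := by
      intro i hi hiF
      have h1 := hb i hi
      have hpos : 0 < μ i := lt_of_le_of_ne h1.1 (Ne.symm (hnz i hi))
      by_contra hne
      exact hiF (Finset.mem_filter.mpr ⟨hi, hpos, lt_of_le_of_ne h1.2 hne⟩)
    have hFA : F.card ≤ A.card := Finset.card_le_card hFsub
    have hFsum : ∑ i ∈ F, μ i = (F.card : ℝ) - (d + 1) := by
      have h4 := Finset.sum_sdiff (f := μ) hFsub
      have h3 : ∑ i ∈ A \ F, μ i = ((A \ F).card : ℝ) := by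
        rw [Finset.sum_congr rfl (fun i hi => hone i (Finset.mem_sdiff.mp hi).1
          (Finset.mem_sdiff.mp hi).2)]
        rw [Finset.sum_const, nsmul_eq_mul, mul_one]
      have h5 : ((A \ F).card : ℝ) = (A.card : ℝ) - F.card := by
        rw [Finset.card_sdiff_of_subset hFsub]
        push_cast [hFA]
        ring
      rw [h3, h5] at h4
      linarith [hsμ, h4]
    have hFge : d + 2 ≤ F.card := by
      by_contra hlt
      push_neg at hlt
      rcases F.eq_empty_or_nonempty with hFe | hFne
      · rw [hFe] at hFsum
        simp only [Finset.sum_empty, Finset.card_empty, Nat.cast_zero] at hFsum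
        have : (0:ℝ) ≤ (d : ℝ) := by positivity
        linarith
      · have hpos : 0 < ∑ i ∈ F, μ i := Finset.sum_pos (fun i hi => (hFpos i hi).1) hFne
        have hcF : (F.card : ℝ) ≤ (d : ℝ) + 1 := by exact_mod_cast (by omega : F.card ≤ d + 1)
        linarith
    obtain ⟨ν, hν0, ⟨i0, hi0F, hi0ne⟩, hνsum, hνu⟩ := exists_kernel_vec u F hFge
    set G := F.filter (fun i => ν i ≠ 0) with hGdef
    have hGne : G.Nonempty := ⟨i0, Finset.mem_filter.mpr ⟨hi0F, hi0ne⟩⟩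
    set bf : ι → ℝ := fun i => if 0 < ν i then (1 - μ i) / ν i else μ i / (-ν i) with hbfdef
    have hbpos : ∀ i ∈ G, 0 < bf i := by
      intro i hi
      rw [hGdef, Finset.mem_filter] at hi
      have h1 := hFpos i hi.1
      rw [hbfdef]
      dsimp only
      rcases lt_or_gt_of_ne hi.2 with hneg | hpos
      · rw [if_neg (by linarith)]
        exact div_pos h1.1 (by linarith)
      · rw [if_pos hpos]
        exact div_pos (by linarith) hpos
    set t := G.inf' hGne bf with htdef
    have ht : 0 < t := (Finset.lt_inf'_iff hGne).mpr hbpos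
    have htle : ∀ i ∈ G, t ≤ bf i := fun i hi => Finset.inf'_le _ hi
    set μ' : ι → ℝ := fun i => μ i + t * ν i with hμ'def
    have hν0A : ∀ i ∈ A, i ∉ F → ν i = 0 := fun i _ h => hν0 i h
    -- bounds
    have hb' : ∀ i ∈ A, 0 ≤ μ' i ∧ μ' i ≤ 1 := by
      intro i hi
      rw [hμ'def]; dsimp only
      by_cases hνi : ν i = 0
      · rw [hνi, mul_zero, add_zero]; exact hb i hi
      · have hiF : i ∈ F := by by_contra h; exact hνi (hν0 i h)
        have hiG : i ∈ G := Finset.mem_filter.mpr ⟨hiF, hνi⟩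
        have h1 := hFpos i hiF
        have htb := htle i hiG
        rcases lt_or_gt_of_ne hνi with hneg | hpos
        · have hbf : bf i = μ i / (-ν i) := if_neg (by linarith)
          rw [hbf] at htb
          constructor
          · have h2 : t * ν i ≥ (μ i / (-ν i)) * ν i := by
              have := mul_le_mul_of_nonpos_right htb (le_of_lt hneg)
              linarith
            have h3 : (μ i / (-ν i)) * ν i = -μ i := by
              rw [div_mul_eq_mul_div, div_neg, mul_div_assoc, div_self hνi, mul_one]
            linarith
          · nlinarith
        · have hbf : bf i = (1 - μ i) / ν i := if_pos hpos
          rw [hbf] at htb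
          constructor
          · nlinarith
          · have h2 : t * ν i ≤ ((1 - μ i) / ν i) * ν i :=
              mul_le_mul_of_nonneg_right htb (le_of_lt hpos)
            have h3 : ((1 - μ i) / ν i) * ν i = 1 - μ i := by field_simp
            linarith
    -- sums
    have hνsumA : ∑ i ∈ A, ν i = 0 := by
      rw [← Finset.sum_subset hFsub hν0A]
      exact hνsum
    have hνuA : ∀ j, ∑ i ∈ A, ν i * u i j = 0 := by
      intro j
      rw [← Finset.sum_subset hFsub (fun i hiA hiF => by rw [hν0A i hiA hiF, zero_mul])]
      exact hνu j
    have hQμ' : Q μ' := by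
      refine ⟨hb', ?_, ?_⟩
      · rw [hμ'def]
        dsimp only
        rw [Finset.sum_add_distrib, ← Finset.mul_sum, hνsumA, mul_zero, add_zero]
        exact hsμ
      · intro j
        rw [hμ'def]
        dsimp only
        have hexp : ∀ i ∈ A, (μ i + t * ν i) * u i j = μ i * u i j + t * (ν i * u i j) := by
          intro i _; ring
        rw [Finset.sum_congr rfl hexp, Finset.sum_add_distrib, ← Finset.mul_sum, hzμ j,
          hνuA j, mul_zero, add_zero]
    -- the element leaving (0,1)
    obtain ⟨istar, histar, htstar⟩ := Finset.exists_mem_eq_inf' hGne bf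
    have histarF : istar ∈ F := (Finset.mem_filter.mp histar).1
    have histarν : ν istar ≠ 0 := (Finset.mem_filter.mp histar).2
    have hstar01 : μ' istar = 0 ∨ μ' istar = 1 := by
      rw [hμ'def]
      dsimp only
      rw [← htdef] at htstar
      rcases lt_or_gt_of_ne histarν with hneg | hpos
      · left
        have hbf : bf istar = μ istar / (-ν istar) := if_neg (by linarith)
        have h3 : (μ istar / (-ν istar)) * ν istar = -μ istar := by
          rw [div_mul_eq_mul_div, div_neg, mul_div_assoc, div_self histarν, mul_one]
        rw [htstar, hbf, h3]
        ring
      · right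
        have hbf : bf istar = (1 - μ istar) / ν istar := if_pos hpos
        rw [htstar, hbf, div_mul_cancel₀ _ histarν]
        ring
    have hF'sub : A.filter (fun i => 0 < μ' i ∧ μ' i < 1) ⊆ F.erase istar := by
      intro i hi
      rw [Finset.mem_filter] at hi
      have hiF : i ∈ F := by
        by_contra hiF
        have h1 : μ i = 1 := hone i hi.1 hiF
        have h2 : ν i = 0 := hν0 i hiF
        have : μ' i = 1 := by rw [hμ'def]; dsimp only; rw [h1, h2, mul_zero, add_zero]
        rw [this] at hi
        exact lt_irrefl 1 hi.2.2
      refine Finset.mem_erase.mpr ⟨?_, hiF⟩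
      intro hieq
      rw [hieq] at hi
      rcases hstar01 with h | h
      · rw [h] at hi; exact lt_irrefl 0 hi.2.1
      · rw [h] at hi; exact lt_irrefl 1 hi.2.2
    refine ⟨μ', hQμ', ?_⟩
    calc (A.filter (fun i => 0 < μ' i ∧ μ' i < 1)).card
        ≤ (F.erase istar).card := Finset.card_le_card hF'sub
      _ < F.card := by
          rw [Finset.card_erase_of_mem histarF]
          have : 1 ≤ F.card := Finset.card_pos.mpr ⟨istar, histarF⟩
          omega
  -- descent by strong induction on the fractional count
  have main : ∀ (Nb : ℕ) (μ : ι → ℝ), Q μ →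
      (A.filter (fun i => 0 < μ i ∧ μ i < 1)).card ≤ Nb →
      ∃ μ' : ι → ℝ, Q μ' ∧ ∃ a ∈ A, μ' a = 0 := by
    intro Nb
    induction Nb with
    | zero =>
      intro μ hQμ hc
      by_cases hex : ∃ a ∈ A, μ a = 0
      · exact ⟨μ, hQμ, hex⟩
      · push_neg at hex
        obtain ⟨μ', _, hlt⟩ := step μ hQμ hex
        omega
    | succ n ihn =>
      intro μ hQμ hc
      by_cases hex : ∃ a ∈ A, μ a = 0
      · exact ⟨μ, hQμ, hex⟩
      · push_neg at hex
        obtain ⟨μ', hQμ', hlt⟩ := step μ hQμ hex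
        exact ihn μ' hQμ' (by omega)
  obtain ⟨μ, hQμ, a, ha, hμa⟩ := main _ _ hQ0 le_rfl
  exact ⟨a, ha, μ, hQμ.1, hQμ.2.1, hQμ.2.2, hμa⟩

/-- The Grinberg–Sevastyanov chain construction. -/
lemma chain_aux {ι : Type*} [DecidableEq ι] {d : ℕ} {c : ℝ} (hc : 0 ≤ c)
    {u : ι → Fin d → ℝ} (hu : ∀ i j, |u i j| ≤ c) :
    ∀ (t : ℕ) (A : Finset ι) (lam : ι → ℝ), A.card = d + t →
      (∀ i ∈ A, 0 ≤ lam i ∧ lam i ≤ 1) →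
      (∑ i ∈ A, lam i = (A.card : ℝ) - d) →
      (∀ j, ∑ i ∈ A, lam i * u i j = 0) →
      ∃ C : ℕ → Finset ι, (∀ k, C k ⊆ C (k + 1)) ∧ (∀ k, k ≤ A.card → (C k).card = k)
        ∧ (∀ k, A.card ≤ k → C k = A)
        ∧ (∀ k j, |∑ i ∈ C k, u i j| ≤ d * c) := by
  intro t
  induction t with
  | zero =>
    intro A lam hcard h01 hs hz
    refine ⟨fun k => (A.toList.take k).toFinset, ?_, ?_, ?_, ?_⟩
    · intro k x hx
      rw [List.mem_toFinset] at hx ⊢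
      rw [List.take_succ]
      exact List.mem_append_left _ hx
    · intro k hk
      rw [List.toFinset_card_of_nodup ((A.nodup_toList).sublist (List.take_sublist _ _)),
        List.length_take, A.length_toList]
      omega
    · intro k hk
      show (A.toList.take k).toFinset = A
      rw [List.take_of_length_le (by rw [A.length_toList]; exact hk), Finset.toList_toFinset]
    · intro k j
      have hsub : (A.toList.take k).toFinset ⊆ A := by
        intro x hx
        rw [List.mem_toFinset] at hx
        exact Finset.mem_toList.mp (List.take_subset _ _ hx)
      calc |∑ i ∈ (A.toList.take k).toFinset, u i j|
          ≤ ∑ i ∈ (A.toList.take k).toFinset, |u i j| := Finset.abs_sum_le_sum_abs _ _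
        _ ≤ ∑ i ∈ (A.toList.take k).toFinset, c := Finset.sum_le_sum (fun i _ => hu i j)
        _ = ((A.toList.take k).toFinset.card : ℝ) * c := by
            rw [Finset.sum_const, nsmul_eq_mul]
        _ ≤ d * c := by
            apply mul_le_mul_of_nonneg_right _ hc
            have := Finset.card_le_card hsub
            have : (A.toList.take k).toFinset.card ≤ d := by omega
            exact_mod_cast this
  | succ t ihs =>
    intro A lam hcard h01 hs hz
    have hA1 : d + 1 ≤ A.card := by omega
    obtain ⟨a, haA, mu, hmu01, hmusum, hmuz, hmua⟩ := peel_aux hA1 h01 hs hz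
    set A' := A.erase a with hA'
    have hA'card : A'.card = d + t := by
      rw [hA', Finset.card_erase_of_mem haA]; omega
    have hA'sub : A' ⊆ A := Finset.erase_subset _ _
    have h01' : ∀ i ∈ A', 0 ≤ mu i ∧ mu i ≤ 1 := fun i hi => hmu01 i (hA'sub hi)
    have hs'' : ∑ i ∈ A', mu i = (A'.card : ℝ) - d := by
      rw [hA', Finset.sum_erase _ hmua, hmusum, Finset.card_erase_of_mem haA]
      have : (1 : ℕ) ≤ A.card := by omega
      push_cast [this]
      ring
    have hz'' : ∀ j, ∑ i ∈ A', mu i * u i j = 0 := by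
      intro j
      rw [hA', Finset.sum_erase _ (by rw [hmua, zero_mul])]
      exact hmuz j
    obtain ⟨C, hC1, hC2, hC3, hC4⟩ := ihs A' mu hA'card h01' hs'' hz''
    refine ⟨fun k => if A.card ≤ k then A else C k, ?_, ?_, ?_, ?_⟩
    · intro k
      dsimp only
      by_cases h1 : A.card ≤ k
      · rw [if_pos h1, if_pos (by omega)]
      · rw [if_neg h1]
        by_cases h2 : A.card ≤ k + 1
        · rw [if_pos h2]
          have hk : k = A'.card := by omega
          rw [hk, hC3 _ (le_refl _)]
          exact hA'sub
        · rw [if_neg h2]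
          exact hC1 k
    · intro k hk
      dsimp only
      by_cases h1 : A.card ≤ k
      · rw [if_pos h1]; omega
      · rw [if_neg h1]
        exact hC2 k (by omega)
    · intro k hk
      dsimp only
      rw [if_pos hk]
    · intro k j
      dsimp only
      by_cases h1 : A.card ≤ k
      · rw [if_pos h1]
        have hrw : ∑ i ∈ A, u i j = ∑ i ∈ A, (1 - lam i) * u i j := by
          rw [Finset.sum_congr rfl (fun i _ => by ring_nf :
            ∀ i ∈ A, u i j = (1 - lam i) * u i j + lam i * u i j),
            Finset.sum_add_distrib, hz j, add_zero]
        rw [hrw]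
        calc |∑ i ∈ A, (1 - lam i) * u i j|
            ≤ ∑ i ∈ A, |(1 - lam i) * u i j| := Finset.abs_sum_le_sum_abs _ _
          _ ≤ ∑ i ∈ A, (1 - lam i) * c := by
              apply Finset.sum_le_sum
              intro i hi
              rw [abs_mul, abs_of_nonneg (by linarith [(h01 i hi).2] : (0:ℝ) ≤ 1 - lam i)]
              exact mul_le_mul_of_nonneg_left (hu i j) (by linarith [(h01 i hi).2])
          _ = d * c := by
              have h2 : ∑ i ∈ A, (1 - lam i) = (d : ℝ) := by
                rw [Finset.sum_sub_distrib, hs, Finset.sum_const, nsmul_eq_mul, mul_one]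
                ring
              rw [← Finset.sum_mul, h2]
      · rw [if_neg h1]
        exact hC4 k j

/-- Steinitz-type chain for a zero-sum family. -/
lemma gs_chain {ι : Type*} [Fintype ι] [DecidableEq ι] {d : ℕ} {c : ℝ} (hc : 0 ≤ c)
    (hd : d ≤ Fintype.card ι) (h0 : 0 < Fintype.card ι)
    (u : ι → Fin d → ℝ) (hu : ∀ i j, |u i j| ≤ c)
    (hsum : ∀ j, ∑ i, u i j = 0) :
    ∃ C : ℕ → Finset ι, (∀ k, C k ⊆ C (k + 1)) ∧
      (∀ k, k ≤ Fintype.card ι → (C k).card = k) ∧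
      (∀ k j, |∑ i ∈ C k, u i j| ≤ d * c) := by
  set m := Fintype.card ι with hm
  have hcardu : (Finset.univ : Finset ι).card = m := by rw [hm, Fintype.card]
  have hmpos : (0 : ℝ) < m := by exact_mod_cast h0
  set lam : ι → ℝ := fun _ => ((m : ℝ) - d) / m with hlam
  have hdm : (d : ℝ) ≤ m := by exact_mod_cast hd
  have h01 : ∀ i ∈ (Finset.univ : Finset ι), 0 ≤ lam i ∧ lam i ≤ 1 := by
    intro i _
    constructor
    · apply div_nonneg (by linarith) (le_of_lt hmpos)
    · rw [div_le_one hmpos]; linarith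
  have hslam : ∑ i ∈ (Finset.univ : Finset ι), lam i = ((Finset.univ : Finset ι).card : ℝ) - d := by
    rw [hcardu, hlam]
    simp only [Finset.sum_const, nsmul_eq_mul, hcardu]
    field_simp
  have hzlam : ∀ j, ∑ i ∈ (Finset.univ : Finset ι), lam i * u i j = 0 := by
    intro j
    rw [← Finset.mul_sum, hsum j, mul_zero]
  obtain ⟨C, h1, h2, h3, h4⟩ := chain_aux hc hu (m - d) Finset.univ lam
    (by rw [hcardu]; omega) h01 hslam hzlam
  exact ⟨C, h1, fun k hk => h2 k (by rwa [hcardu]), h4⟩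

/-- Zero-sum block extraction. -/
lemma zero_block {ι : Type*} [Fintype ι] [DecidableEq ι] (r d q M : ℕ)
    (hr : 0 < r) (hd : 0 < d) (hM : 0 < M) (hqM : q ≤ M * r)
    (v : ι → Fin d → ℤ) (hv : ∀ i j, |v i j| ≤ (r : ℤ))
    (z : Fin d → ℤ) (hz : ∀ j, |z j| ≤ (q : ℤ))
    (hsum : ∀ j, ∑ i, v i j = z j)
    (hcard : (M + 1) * (2 * r * d + 1) ^ d < Fintype.card ι) :
    ∃ B : Finset ι, B.Nonempty ∧ ∀ j, ∑ i ∈ B, v i j = 0 := by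
  classical
  have hMne : (M : ℤ) ≠ 0 := by exact_mod_cast hM.ne'
  have hMpos : (0 : ℤ) < (M : ℤ) := by exact_mod_cast hM
  set f : ℕ → Fin d → ℤ := fun t j => ((t : ℤ) * z j) / (M : ℤ) with hfdef
  set y : Fin M → Fin d → ℤ := fun ℓ j => -(f (ℓ.1 + 1) j - f ℓ.1 j) with hydef
  have hzr : ∀ j, -(↑r * ↑M) ≤ z j ∧ z j ≤ (r : ℤ) * M := by
    intro j
    have h1 := hz j
    have h2 : (q : ℤ) ≤ (M : ℤ) * r := by exact_mod_cast hqM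
    rw [abs_le] at h1
    constructor <;> nlinarith [h1.1, h1.2]
  have hstep : ∀ (t : ℕ) j, f t j - (r : ℤ) ≤ f (t + 1) j ∧ f (t + 1) j ≤ f t j + r := by
    intro t j
    have he : ((t + 1 : ℕ) : ℤ) * z j = (t : ℤ) * z j + z j := by push_cast; ring
    constructor
    · have h1 : (t : ℤ) * z j + (-(r : ℤ)) * M ≤ (t : ℤ) * z j + z j := by
        have := (hzr j).1; linarith
      have h2 := Int.ediv_le_ediv hMpos h1
      rw [Int.add_mul_ediv_right _ _ hMne] at h2
      calc f t j - (r : ℤ) = ((t : ℤ) * z j) / M + (-(r:ℤ)) := by ring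
        _ ≤ ((t : ℤ) * z j + z j) / M := h2
        _ = f (t + 1) j := by rw [hfdef]; dsimp only; rw [he]
    · have h1 : (t : ℤ) * z j + z j ≤ (t : ℤ) * z j + (r : ℤ) * M := by
        have := (hzr j).2; linarith
      have h2 := Int.ediv_le_ediv hMpos h1
      rw [Int.add_mul_ediv_right _ _ hMne] at h2
      calc f (t + 1) j = ((t : ℤ) * z j + z j) / M := by rw [hfdef]; dsimp only; rw [he]
        _ ≤ ((t : ℤ) * z j) / M + (r : ℤ) := h2
        _ = f t j + r := rfl
  have hyb : ∀ ℓ j, |y ℓ j| ≤ (r : ℤ) := by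
    intro ℓ j
    rw [hydef]
    dsimp only
    rw [abs_le]
    have := hstep ℓ.1 j
    constructor <;> linarith [this.1, this.2]
  have hysum : ∀ j, ∑ ℓ : Fin M, y ℓ j = -z j := by
    intro j
    have h0 : f 0 j = 0 := by rw [hfdef]; simp
    have hMj : f M j = z j := by
      rw [hfdef]
      dsimp only
      exact Int.mul_ediv_cancel_left _ hMne
    have htel : ∑ ℓ ∈ Finset.range M, (f (ℓ + 1) j - f ℓ j) = z j := by
      rw [Finset.sum_range_sub (fun t => f t j), hMj, h0, sub_zero]
    have hswap : ∑ ℓ : Fin M, y ℓ j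
        = ∑ ℓ ∈ Finset.range M, (-(f (ℓ + 1) j - f ℓ j)) := by
      rw [hydef]
      exact Fin.sum_univ_eq_sum_range (fun ℓ => -(f (ℓ + 1) j - f ℓ j)) M
    rw [hswap, Finset.sum_neg_distrib, htel]
  -- combined family
  set V : ι ⊕ Fin M → Fin d → ℤ := Sum.elim v y with hVdef
  set u : ι ⊕ Fin M → Fin d → ℝ := fun i j => (V i j : ℝ) with hudef
  have hub : ∀ i j, |u i j| ≤ (r : ℝ) := by
    intro i j
    rw [hudef]
    dsimp only
    rw [← Int.cast_abs]
    cases i with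
    | inl x => exact_mod_cast hv x j
    | inr ℓ => exact_mod_cast hyb ℓ j
  have husum : ∀ j, ∑ i : ι ⊕ Fin M, u i j = 0 := by
    intro j
    rw [hudef]
    dsimp only
    rw [← Int.cast_sum]
    have : ∑ i : ι ⊕ Fin M, V i j = 0 := by
      rw [Fintype.sum_sum_type]
      rw [hVdef]
      simp only [Sum.elim_inl, Sum.elim_inr]
      rw [hsum j, hysum j]
      ring
    rw [this, Int.cast_zero]
  set m' := Fintype.card (ι ⊕ Fin M) with hm'
  have hm'card : m' = Fintype.card ι + M := by
    rw [hm', Fintype.card_sum, Fintype.card_fin]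
  have hpowd : d ≤ (M + 1) * (2 * r * d + 1) ^ d := by
    have h1 : 2 * r * d + 1 ≤ (2 * r * d + 1) ^ d := Nat.le_self_pow hd.ne' _
    have h2 : (2 * r * d + 1) ^ d ≤ (M + 1) * (2 * r * d + 1) ^ d :=
      Nat.le_mul_of_pos_left _ (by omega)
    nlinarith
  have hdm' : d ≤ m' := by omega
  obtain ⟨C, hC1, hC2, hC3⟩ := gs_chain (c := (r : ℝ)) (by positivity) hdm' (by omega) u hub husum
  have hmono : Monotone C := monotone_nat_of_le_succ hC1
  set sS : ℕ → Fin d → ℤ := fun k j => ∑ i ∈ C k, V i j with hsSdef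
  set cnt : ℕ → ℕ := fun k => ((C k).filter (fun i => i.isRight)).card with hcntdef
  have hsb : ∀ k j, |sS k j| ≤ (d : ℤ) * r := by
    intro k j
    have h1 := hC3 k j
    rw [hudef] at h1
    dsimp only at h1
    rw [← Int.cast_sum, ← Int.cast_abs] at h1
    rw [hsSdef]
    dsimp only
    exact_mod_cast h1
  have hcntM : ∀ k, cnt k ≤ M := by
    intro k
    rw [hcntdef]
    dsimp only
    have h1 : (C k).filter (fun i => i.isRight) ⊆ Finset.univ.filter (fun i => i.isRight) :=
      Finset.filter_subset_filter _ (Finset.subset_univ _)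
    have h2 : (Finset.univ.filter (fun i : ι ⊕ Fin M => i.isRight)) =
        Finset.univ.image Sum.inr := by
      ext x
      cases x <;> simp
    have h3 := Finset.card_le_card h1
    rw [h2, Finset.card_image_of_injective _ Sum.inr_injective] at h3
    simpa using h3
  -- pigeonhole
  set box := (Fintype.piFinset (fun _ : Fin d => Finset.Icc (-(((d : ℤ)) * r)) ((d : ℤ) * r)))
    ×ˢ Finset.range (M + 1) with hboxdef
  have hboxcard : box.card = (2 * r * d + 1) ^ d * (M + 1) := by
    rw [hboxdef, Finset.card_product, Finset.card_range, Fintype.card_piFinset]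
    congr 1
    rw [Finset.prod_const, Finset.card_univ, Fintype.card_fin]
    congr 1
    rw [Int.card_Icc]
    have : ((d : ℤ) * r + 1 - -((d : ℤ) * r)) = ((2 * r * d + 1 : ℕ) : ℤ) := by push_cast; ring
    rw [this, Int.toNat_natCast]
  have hmaps : ∀ k ∈ Finset.range (m' + 1), (sS k, cnt k) ∈ box := by
    intro k _
    rw [hboxdef, Finset.mem_product]
    constructor
    · rw [Fintype.mem_piFinset]
      intro j
      rw [Finset.mem_Icc]
      have := hsb k j
      rw [abs_le] at this
      exact this
    · rw [Finset.mem_range]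
      exact Nat.lt_succ_of_le (hcntM k)
  have hlt : box.card < (Finset.range (m' + 1)).card := by
    rw [hboxcard, Finset.card_range]
    have : (M + 1) * (2 * r * d + 1) ^ d = (2 * r * d + 1) ^ d * (M + 1) := Nat.mul_comm _ _
    omega
  obtain ⟨a, ha, b, hb, hab, heq⟩ :=
    Finset.exists_ne_map_eq_of_card_lt_of_maps_to hlt hmaps
  rw [Finset.mem_range] at ha hb
  -- main extraction for ordered pair
  have main : ∀ a b : ℕ, a < b → a ≤ m' → b ≤ m' → sS a = sS b → cnt a = cnt b →
      ∃ B : Finset ι, B.Nonempty ∧ ∀ j, ∑ i ∈ B, v i j = 0 := by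
    intro a b hlt' ham hbm hseq hceq
    have hsub : C a ⊆ C b := hmono (le_of_lt hlt')
    have hcc : (C a).card < (C b).card := by
      rw [hC2 a ham, hC2 b hbm]; exact hlt'
    have hfil : (C a).filter (fun i => i.isRight) = (C b).filter (fun i => i.isRight) :=
      Finset.eq_of_subset_of_card_le (Finset.filter_subset_filter _ hsub) (le_of_eq hceq.symm)
    set B' := C b \ C a with hB'def
    have hB'ne : B'.Nonempty := by
      rw [hB'def, Finset.sdiff_nonempty]
      intro hcb
      exact absurd (Finset.card_le_card hcb) (not_le.mpr hcc)
    have hB'left : ∀ x ∈ B', ∀ ℓ : Fin M, x ≠ Sum.inr ℓ := by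
      intro x hx ℓ hxe
      rw [hB'def, Finset.mem_sdiff] at hx
      have hxr : x ∈ (C b).filter (fun i => i.isRight) := by
        rw [Finset.mem_filter]
        exact ⟨hx.1, by rw [hxe]; simp⟩
      rw [← hfil, Finset.mem_filter] at hxr
      exact hx.2 hxr.1
    have hB'sum : ∀ j, ∑ i ∈ B', V i j = 0 := by
      intro j
      rw [hB'def, Finset.sum_sdiff_eq_sub hsub]
      have := congrFun hseq j
      rw [hsSdef] at this
      dsimp only at this
      rw [← this]
      ring
    refine ⟨B'.preimage Sum.inl (Sum.inl_injective.injOn), ?_, ?_⟩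
    · obtain ⟨x, hx⟩ := hB'ne
      cases x with
      | inl x' =>
        exact ⟨x', Finset.mem_preimage.mpr hx⟩
      | inr ℓ => exact absurd rfl (hB'left _ hx ℓ)
    · intro j
      have hpre : ∑ x ∈ B'.preimage Sum.inl (Sum.inl_injective.injOn), v x j
          = ∑ x ∈ B', V x j :=
        Finset.sum_preimage Sum.inl B' _ (fun i => V i j) (by
          intro x hx hxr
          exfalso
          cases x with
          | inl x' => exact hxr ⟨x', rfl⟩
          | inr ℓ => exact (hB'left _ hx ℓ) rfl)
      rw [hpre]
      exact hB'sum j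
  have heq1 : sS a = sS b := (Prod.mk.injEq _ _ _ _).mp heq |>.1
  have heq2 : cnt a = cnt b := (Prod.mk.injEq _ _ _ _).mp heq |>.2
  rcases lt_or_gt_of_ne hab with h | h
  · exact main a b h (by omega) (by omega) heq1 heq2
  · exact main b a h (by omega) (by omega) heq1.symm heq2.symm

/-- Caro–Shapira–Yuster / Alon–Berman: for positive integers `r, d, q`, any
sequence of `n ≥ (⌈q/r⌉ + 2)(2rd + 1)^d` integer vectors in `[-r, r]^d` whose
sum `z` lies in `[-q, q]^d` contains a subsequence of length at most
`(⌈q/r⌉ + 2)(2rd + 1)^d` whose sum is also `z`.  (Here `⌈q/r⌉ = (q+r-1)/r`.) -/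
theorem stmt_7 (r d q : ℕ) (hr : 0 < r) (hd : 0 < d) (hq : 0 < q) (n : ℕ)
    (hn : ((q + r - 1) / r + 2) * (2 * r * d + 1) ^ d ≤ n)
    (w : Fin n → Fin d → ℤ) (hw : ∀ i j, |w i j| ≤ (r : ℤ))
    (z : Fin d → ℤ) (hz : ∀ j, |z j| ≤ (q : ℤ)) (hsum : ∑ i, w i = z) :
    ∃ T : Finset (Fin n),
      T.card ≤ ((q + r - 1) / r + 2) * (2 * r * d + 1) ^ d ∧
      ∑ i ∈ T, w i = z := by
  set M : ℕ := (q + r - 1) / r + 1 with hMdef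
  set N : ℕ := ((q + r - 1) / r + 2) * (2 * r * d + 1) ^ d with hNdef
  have hqM : q ≤ M * r := by
    have h1 : q + r - 1 < r * M := by rw [hMdef]; exact Nat.lt_mul_div_succ _ hr
    rw [Nat.mul_comm]
    exact le_of_lt (lt_of_le_of_lt (by omega) h1)
  have hNM : N = (M + 1) * (2 * r * d + 1) ^ d := by rw [hNdef, hMdef]
  have key : ∀ m : ℕ, ∀ S : Finset (Fin n), S.card = m →
      (∀ j, ∑ i ∈ S, w i j = z j) →
      ∃ T : Finset (Fin n), T ⊆ S ∧ T.card ≤ N ∧ ∀ j, ∑ i ∈ T, w i j = z j := by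
    intro m
    induction m using Nat.strong_induction_on with
    | _ m ih =>
      intro S hScard hSsum
      by_cases hle : S.card ≤ N
      · exact ⟨S, Finset.Subset.refl S, hle, hSsum⟩
      · push_neg at hle
        -- extract a zero-sum block from S
        have hcard : (M + 1) * (2 * r * d + 1) ^ d < Fintype.card (↥S) := by
          rw [Fintype.card_coe, ← hNM]; exact hle
        have hsum' : ∀ j, ∑ i : ↥S, w i.1 j = z j := by
          intro j; rw [Finset.sum_coe_sort S (fun i => w i j)]; exact hSsum j
        obtain ⟨B, hBne, hBsum⟩ := zero_block r d q M hr hd (by rw [hMdef]; exact Nat.succ_pos _) hqM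
          (fun i : ↥S => w i.1) (fun i j => hw i.1 j) z hz hsum' hcard
        set B' : Finset (Fin n) := B.image Subtype.val with hB'def
        have hB'sub : B' ⊆ S := by
          intro x hx
          rw [hB'def, Finset.mem_image] at hx
          obtain ⟨y, _, rfl⟩ := hx
          exact y.2
        have hB'ne : B'.Nonempty := hBne.image _
        have hB'sum : ∀ j, ∑ i ∈ B', w i j = 0 := by
          intro j
          rw [hB'def, Finset.sum_image (fun x _ y _ h => Subtype.val_injective h)]
          exact hBsum j
        have hcard' : (S \ B').card < m := by
          have h1 : B'.card ≤ S.card := Finset.card_le_card hB'sub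
          have h2 : 0 < B'.card := Finset.card_pos.mpr hB'ne
          rw [Finset.card_sdiff_of_subset hB'sub]
          omega
        obtain ⟨T, hT1, hT2, hT3⟩ := ih _ hcard' (S \ B') rfl (by
          intro j
          have := Finset.sum_sdiff (f := fun i => w i j) hB'sub
          have h0 := hB'sum j
          have hS := hSsum j
          linarith)
        exact ⟨T, hT1.trans (Finset.sdiff_subset), hT2, hT3⟩
  obtain ⟨T, _, hT2, hT3⟩ := key (Finset.univ.card) Finset.univ rfl (by
    intro j
    have := congrFun hsum j
    simpa using this)
  refine ⟨T, hT2, funext fun j => ?_⟩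
  rw [Finset.sum_apply]
  exact hT3 j
end

section
/- Let G be a graph with a k-set S inducing a clique or independent set, such that all vertices of S have degrees within M of each other. Then there exists a set T of at most (M+2)(2k−1)^{k−1} vertices of G, disjoint from S, such that in the induced subgraph H = G − T all k vertices of S have equal degree. -/
open Finset

variable {V : Type*} [Fintype V] [DecidableEq V]

/-!
Fix `v₀ ∈ S` and give each vertex `w ∉ S` the vector `(𝟙[w ~ u] - 𝟙[w ~ v₀])_{u ∈ S \ {v₀}}`
in `{-1, 0, 1}^d`, `d = k - 1`. As `S` is a clique or an independent set, these vectors add up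
to `(deg u - deg v₀)_u`, whose entries are at most `M` in absolute value, and deleting
`T ⊆ V \ S` equalises the degrees on `S` exactly when the vectors of `T` have that same sum.
A minimal such `T` has at most `(M + 1)(2d + 1)^d` elements (Caro–Shapira–Yuster): it has no
nonempty zero-sum subset, yet if `T` is padded by `M` vectors cancelling its sum and ordered by
the Steinitz lemma (prefix sums of sup norm at most `d`, by the Grinberg–Sevastyanov argument),
two prefixes with equal sums and equal numbers of padding vectors enclose such a subset, and
the `#T + M + 1` prefixes take at most `(2d + 1)^d (M + 1)` such values.
-/

open Module

section AffineRelation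

variable {k E ι : Type*} [Field k] [AddCommGroup E] [Module k E] [FiniteDimensional k E]

theorem exists_affine_relation_of_finrank_succ_lt_card (v : ι → E) (F : Finset ι)
    (hF : finrank k E + 1 < #F) :
    ∃ μ : ι → k, (∀ i ∉ F, μ i = 0) ∧ ∑ i ∈ F, μ i = 0 ∧ ∑ i ∈ F, μ i • v i = 0 ∧
      ∃ i ∈ F, μ i ≠ 0 := by
  have hdep : ¬ AffineIndependent k (fun i : F => v i) := fun hind => by
    have := hind.card_le_finrank_succ.trans
      (Nat.add_le_add_right (Submodule.finrank_le _) 1)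
    simp only [Fintype.card_coe] at this
    omega
  simp only [affineIndependent_iff_of_fintype, not_forall] at hdep
  obtain ⟨g, hg, hgv, i, hi⟩ := hdep
  rw [Finset.weightedVSub_eq_linear_combination _ hg] at hgv
  have hext : ∀ i : F, Subtype.val.extend g 0 (i : ι) = g i :=
    Subtype.val_injective.extend_apply _ _
  refine ⟨Subtype.val.extend g 0, fun j hj => ?_, ?_, ?_, i, i.2, by rwa [hext]⟩
  · exact Function.extend_apply' _ _ _ fun ⟨j', hj'⟩ => hj (hj' ▸ j'.2)
  · rwa [← Finset.sum_coe_sort, Finset.sum_congr rfl fun i _ => hext i]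
  · rwa [← Finset.sum_coe_sort, Finset.sum_congr rfl fun i _ => by rw [hext i]]

end AffineRelation

section ExitTime

noncomputable def exitTime (a m : ℝ) : ℝ := if 0 < m then (1 - a) / m else a / -m

variable {a m t : ℝ}

lemma exitTime_nonneg (ha : a ∈ Set.Icc (0 : ℝ) 1) : 0 ≤ exitTime a m := by
  unfold exitTime
  split_ifs with h
  · exact div_nonneg (by linarith [ha.2]) h.le
  · exact div_nonneg ha.1 (neg_nonneg.2 (not_lt.1 h))

lemma add_mul_mem_Icc_of_le_exitTime (ha : a ∈ Set.Icc (0 : ℝ) 1) (hm : m ≠ 0) (ht : 0 ≤ t)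
    (hle : t ≤ exitTime a m) : a + t * m ∈ Set.Icc (0 : ℝ) 1 := by
  unfold exitTime at hle
  obtain ⟨ha0, ha1⟩ := ha
  split_ifs at hle with h
  · rw [le_div_iff₀ h] at hle
    constructor <;> nlinarith
  · have h' : 0 < -m := by linarith [lt_of_le_of_ne (not_lt.1 h) hm]
    rw [le_div_iff₀ h'] at hle
    constructor <;> nlinarith

lemma add_exitTime_mul_notMem_Ioo (hm : m ≠ 0) : a + exitTime a m * m ∉ Set.Ioo (0 : ℝ) 1 := by
  unfold exitTime
  split_ifs with h
  · rw [div_mul_cancel₀ _ hm]; simp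
  · rw [div_neg, neg_mul, div_mul_cancel₀ _ hm]; simp

end ExitTime

theorem exists_add_mul_mem_Icc_notMem_Ioo {ι : Type*} (F : Finset ι) (w μ : ι → ℝ)
    (hw : ∀ i ∈ F, w i ∈ Set.Icc (0 : ℝ) 1) (hμ : ∃ i ∈ F, μ i ≠ 0) :
    ∃ t : ℝ, (∀ i ∈ F, w i + t * μ i ∈ Set.Icc (0 : ℝ) 1) ∧
      ∃ i ∈ F, w i + t * μ i ∉ Set.Ioo (0 : ℝ) 1 := by
  classical
  obtain ⟨i₀, hi₀, hmin⟩ := exists_min_image (F.filter (μ · ≠ 0))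
    (fun i => exitTime (w i) (μ i)) (by simpa [Finset.Nonempty] using hμ)
  rw [mem_filter] at hi₀
  refine ⟨exitTime (w i₀) (μ i₀), fun i hi => ?_, i₀, hi₀.1, add_exitTime_mul_notMem_Ioo hi₀.2⟩
  by_cases hμi : μ i = 0
  · simpa [hμi] using hw i hi
  exact add_mul_mem_Icc_of_le_exitTime (hw i hi) hμi (exitTime_nonneg (hw i₀ hi₀.1))
    (hmin i (mem_filter.2 ⟨hi, hμi⟩))

section BalancingWeight

variable {ι E : Type*} [NormedAddCommGroup E] [NormedSpace ℝ E]

/-- Points of the polytope in the Grinberg–Sevastyanov proof of the Steinitz lemma. -/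
def IsBalancingWeight (A : Finset ι) (v : ι → E) (c : ℝ) (w : ι → ℝ) : Prop :=
  (∀ i ∈ A, w i ∈ Set.Icc (0 : ℝ) 1) ∧ ∑ i ∈ A, w i = c ∧ ∑ i ∈ A, w i • v i = 0

noncomputable def fracSupport (A : Finset ι) (w : ι → ℝ) : Finset ι :=
  A.filter fun i => w i ∈ Set.Ioo (0 : ℝ) 1

variable {A : Finset ι} {v : ι → E} {c : ℝ} {w : ι → ℝ}

lemma fracSupport_subset : fracSupport A w ⊆ A := filter_subset _ _

theorem IsBalancingWeight.exists_card_fracSupport_lt [FiniteDimensional ℝ E]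
    (hw : IsBalancingWeight A v c w) (hF : finrank ℝ E + 1 < #(fracSupport A w)) :
    ∃ w', IsBalancingWeight A v c w' ∧ #(fracSupport A w') < #(fracSupport A w) := by
  set F := fracSupport A w
  obtain ⟨hbox, hsum, hzero⟩ := hw
  obtain ⟨μ, hμF, hμsum, hμv, hμne⟩ := exists_affine_relation_of_finrank_succ_lt_card v F hF
  obtain ⟨t, htF, i₀, hi₀, hi₀t⟩ := exists_add_mul_mem_Icc_notMem_Ioo F w μ
    (fun i hi => hbox i (fracSupport_subset hi)) hμne
  have hμsumA : ∑ i ∈ A, μ i = 0 := by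
    rwa [← sum_subset fracSupport_subset fun i _ hi => hμF i hi]
  have hμvA : ∑ i ∈ A, μ i • v i = 0 := by
    rwa [← sum_subset fracSupport_subset fun i _ hi => by rw [hμF i hi, zero_smul]]
  refine ⟨w + t • μ, ⟨fun i hi => ?_, ?_, ?_⟩, ?_⟩
  · by_cases hiF : i ∈ F
    · exact htF i hiF
    · simpa [hμF i hiF] using hbox i hi
  · simp [sum_add_distrib, ← mul_sum, hsum, hμsumA]
  · simp [add_smul, sum_add_distrib, mul_smul, ← smul_sum, hzero, hμvA]
  · have hsub : fracSupport A (w + t • μ) ⊆ F := fun i hi => by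
      obtain ⟨hiA, hiw⟩ := mem_filter.1 hi
      by_contra hiF
      simp only [Pi.add_apply, Pi.smul_apply, hμF i hiF, smul_zero, add_zero] at hiw
      exact hiF (mem_filter.2 ⟨hiA, hiw⟩)
    refine card_lt_card ((Finset.ssubset_iff_of_subset hsub).2 ⟨i₀, hi₀, fun hi => hi₀t ?_⟩)
    simpa using (mem_filter.1 hi).2

theorem exists_isBalancingWeight_card_fracSupport_le [FiniteDimensional ℝ E]
    (h : ∃ w, IsBalancingWeight A v c w) :
    ∃ w, IsBalancingWeight A v c w ∧ #(fracSupport A w) ≤ finrank ℝ E + 1 := by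
  obtain ⟨w, hw⟩ := h
  induction hn : #(fracSupport A w) using Nat.strong_induction_on generalizing w with
  | _ n ih =>
    by_cases hle : #(fracSupport A w) ≤ finrank ℝ E + 1
    · exact ⟨w, hw, hle⟩
    obtain ⟨w', hw', hlt⟩ := hw.exists_card_fracSupport_lt (not_le.1 hle)
    exact ih _ (hn ▸ hlt) w' hw' rfl

lemma IsBalancingWeight.norm_sum_le_card_sub (hw : IsBalancingWeight A v c w)
    (hv : ∀ i ∈ A, ‖v i‖ ≤ 1) : ‖∑ i ∈ A, v i‖ ≤ #A - c := by
  obtain ⟨hbox, hsum, hzero⟩ := hw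
  have hcompl : ∑ i ∈ A, v i = ∑ i ∈ A, (1 - w i) • v i := by
    simp [sub_smul, sum_sub_distrib, hzero]
  calc ‖∑ i ∈ A, v i‖ ≤ ∑ i ∈ A, ‖(1 - w i) • v i‖ := by
        rw [hcompl]; exact norm_sum_le _ _
    _ ≤ ∑ i ∈ A, (1 - w i) := sum_le_sum fun i hi => by
        rw [norm_smul, Real.norm_of_nonneg (sub_nonneg.2 (hbox i hi).2)]
        exact mul_le_of_le_one_right (sub_nonneg.2 (hbox i hi).2) (hv i hi)
    _ = #A - c := by simp [sum_sub_distrib, hsum]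

lemma IsBalancingWeight.smul (hw : IsBalancingWeight A v c w) {a : ℝ}
    (ha : a ∈ Set.Icc (0 : ℝ) 1) :
    IsBalancingWeight A v (a * c) (a • w) := by
  obtain ⟨hbox, hsum, hzero⟩ := hw
  refine ⟨fun i hi => ⟨mul_nonneg ha.1 (hbox i hi).1, ?_⟩, by simp [← mul_sum, hsum], ?_⟩
  · exact mul_le_one₀ ha.2 (hbox i hi).1 (hbox i hi).2
  · simp [mul_smul, ← smul_sum, hzero]

lemma IsBalancingWeight.erase [DecidableEq ι] (hw : IsBalancingWeight A v c w) {i : ι}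
    (hi : w i = 0) : IsBalancingWeight (A.erase i) v c w := by
  obtain ⟨hbox, hsum, hzero⟩ := hw
  exact ⟨fun j hj => hbox j (mem_of_mem_erase hj), by rwa [sum_erase _ hi],
    by rwa [sum_erase _ (by rw [hi, zero_smul])]⟩

lemma exists_eq_zero_of_card_fracSupport_le {k : ℕ}
    (hw : ∀ i ∈ A, w i ∈ Set.Icc (0 : ℝ) 1) (hsum : ∑ i ∈ A, w i ≤ #A - (k + 1))
    (hF : #(fracSupport A w) ≤ k + 1) : ∃ i ∈ A, w i = 0 := by
  by_contra! hpos
  have hone : ∀ i ∈ A, i ∉ fracSupport A w → 1 - w i = 0 := fun i hi hiF => by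
    have := hw i hi
    simp only [fracSupport, mem_filter, Set.mem_Ioo, not_and, not_lt] at hiF
    linarith [hiF hi (lt_of_le_of_ne this.1 (hpos i hi).symm), this.2]
  have hlt : ∑ i ∈ A, (1 - w i) < k + 1 := by
    rw [← sum_subset fracSupport_subset hone]
    rcases (fracSupport A w).eq_empty_or_nonempty with h | h
    · rw [h, sum_empty]
      positivity
    calc ∑ i ∈ fracSupport A w, (1 - w i) < ∑ i ∈ fracSupport A w, (1 : ℝ) :=
          sum_lt_sum_of_nonempty h fun i hi => by linarith [(mem_filter.1 hi).2.1]
      _ ≤ k + 1 := by simpa using (Nat.cast_le (α := ℝ)).2 hF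
  simp only [sum_sub_distrib, sum_const, nsmul_eq_mul, mul_one] at hlt
  linarith

end BalancingWeight

section Steinitz

variable {ι E : Type*} [NormedAddCommGroup E]

lemma norm_sum_map_le_length (v : ι → E) :
    ∀ l : List ι, (∀ i ∈ l, ‖v i‖ ≤ 1) → ‖(l.map v).sum‖ ≤ l.length
  | [], _ => by simp
  | i :: l, h => by
    rw [List.map_cons, List.sum_cons, List.length_cons, Nat.cast_succ, add_comm (l.length : ℝ)]
    exact (norm_add_le _ _).trans (add_le_add (h i List.mem_cons_self)
      (norm_sum_map_le_length v l fun j hj => h j (List.mem_cons_of_mem _ hj)))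

lemma exists_perm_norm_sum_take_le_of_card_le (v : ι → E) (A : Finset ι)
    (hv : ∀ i ∈ A, ‖v i‖ ≤ 1) {d : ℕ} (hA : #A ≤ d) :
    ∃ l : List ι, l.Perm A.toList ∧ ∀ m, ‖((l.take m).map v).sum‖ ≤ d := by
  refine ⟨A.toList, .refl _, fun m => ?_⟩
  refine (norm_sum_map_le_length v _ fun i hi =>
    hv i (mem_toList.1 (List.mem_of_mem_take hi))).trans ?_
  exact_mod_cast (List.length_take_le' m A.toList).trans (by simpa using hA)

variable [NormedSpace ℝ E] [FiniteDimensional ℝ E] [DecidableEq ι]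

theorem exists_perm_norm_sum_take_le_of_isBalancingWeight (v : ι → E) (A : Finset ι)
    (hv : ∀ i ∈ A, ‖v i‖ ≤ 1) (hw : ∃ w, IsBalancingWeight A v (#A - finrank ℝ E) w) :
    ∃ l : List ι, l.Perm A.toList ∧ ∀ m, ‖((l.take m).map v).sum‖ ≤ finrank ℝ E := by
  induction A using Finset.strongInduction with
  | H A ih =>
  set d := finrank ℝ E
  by_cases hA : #A ≤ d
  · exact exists_perm_norm_sum_take_le_of_card_le v A hv hA
  obtain ⟨w, hw⟩ := hw
  have hdA : (d : ℝ) + 1 ≤ #A := by exact_mod_cast not_le.1 hA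
  have hscaled : ∃ u, IsBalancingWeight A v (#A - (d + 1)) u := by
    have := hw.smul (a := (#A - (d + 1)) / (#A - d))
      ⟨div_nonneg (by linarith) (by linarith), (div_le_one (by linarith)).2 (by linarith)⟩
    rw [div_mul_cancel₀ _ (by linarith)] at this
    exact ⟨_, this⟩
  -- Weights of total `#A - (d + 1)` with at most `d + 1` fractional entries must vanish
  -- somewhere; that vector goes last.
  obtain ⟨u, hu, hfrac⟩ := exists_isBalancingWeight_card_fracSupport_le hscaled
  obtain ⟨i, hiA, hui⟩ := exists_eq_zero_of_card_fracSupport_le hu.1 hu.2.1.le hfrac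
  obtain ⟨l, hl, hpre⟩ := ih (A.erase i) (erase_ssubset hiA)
    (fun j hj => hv j (mem_of_mem_erase hj)) ⟨u, by
      convert hu.erase hui using 1
      rw [card_erase_of_mem hiA, Nat.cast_pred (card_pos.2 ⟨i, hiA⟩)]
      ring⟩
  have hperm : (l ++ [i]).Perm A.toList :=
    (List.perm_append_singleton i l).trans <| (hl.cons i).trans <|
      (toList_insert (notMem_erase i A)).symm.trans (by rw [insert_erase hiA])
  refine ⟨l ++ [i], hperm, fun m => ?_⟩
  rcases le_or_gt m l.length with hm | hm
  · rw [List.take_append_of_le_length hm]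
    exact hpre m
  rw [List.take_of_length_le (by rw [List.length_append, List.length_singleton]; omega),
    (hperm.map v).sum_eq, sum_map_toList]
  calc ‖∑ i ∈ A, v i‖ ≤ #A - (#A - d) := hw.norm_sum_le_card_sub hv
    _ = d := by ring

theorem exists_perm_norm_sum_take_le (v : ι → E) (A : Finset ι)
    (hv : ∀ i ∈ A, ‖v i‖ ≤ 1) (h0 : ∑ i ∈ A, v i = 0) :
    ∃ l : List ι, l.Perm A.toList ∧ ∀ m, ‖((l.take m).map v).sum‖ ≤ finrank ℝ E := by
  by_cases hA : #A ≤ finrank ℝ E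
  · exact exists_perm_norm_sum_take_le_of_card_le v A hv hA
  have hpos : (0 : ℝ) < #A := by exact_mod_cast (Nat.zero_le _).trans_lt (not_le.1 hA)
  have hdA : (finrank ℝ E : ℝ) ≤ #A := by exact_mod_cast (not_le.1 hA).le
  refine exists_perm_norm_sum_take_le_of_isBalancingWeight v A hv
    ⟨fun _ => (#A - finrank ℝ E) / #A, fun _ _ => ⟨?_, ?_⟩, ?_, ?_⟩
  · exact div_nonneg (by linarith) hpos.le
  · exact (div_le_one hpos).2 (by linarith [(finrank ℝ E).cast_nonneg (α := ℝ)])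
  · simp [mul_div_cancel₀ _ hpos.ne']
  · simp [← smul_sum, h0]

end Steinitz

lemma exists_sum_eq_of_abs_le {κ : Type*} {M : ℕ} (s : κ → ℤ) (hs : ∀ j, |s j| ≤ M) :
    ∃ y : Fin M → κ → ℤ, (∀ m j, |y m j| ≤ 1) ∧ ∑ m, y m = s := by
  refine ⟨fun m j => if (m : ℕ) < (s j).natAbs then (s j).sign else 0, fun m j => ?_,
    funext fun j => ?_⟩
  · dsimp only
    split_ifs
    · rcases (s j).sign_trichotomy with h | h | h <;> simp [h]
    · simp
  · have hsM : (s j).natAbs ≤ M := by have := hs j; rw [Int.abs_eq_natAbs] at this; omega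
    have hfilter : (range M).filter (· < (s j).natAbs) = range (s j).natAbs := by
      ext m; simp only [mem_filter, mem_range]; omega
    rw [Finset.sum_apply,
      Fin.sum_univ_eq_sum_range (fun m => if m < (s j).natAbs then (s j).sign else 0),
      ← sum_filter, hfilter, sum_const, card_range, nsmul_eq_mul, mul_comm, Int.sign_mul_natAbs]

lemma exists_nonempty_sum_eq_zero_of_ssubset {ι β G : Type*} [DecidableEq ι] [DecidableEq β]
    [AddCommGroup G] (x : ι → G) (y : β → G) {P Q : Finset (ι ⊕ β)} (hPQ : P ⊂ Q)
    (hsum : ∑ a ∈ P, Sum.elim x y a = ∑ a ∈ Q, Sum.elim x y a)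
    (hcard : #P.toRight = #Q.toRight) :
    ∃ C ⊆ Q.toLeft, C.Nonempty ∧ ∑ i ∈ C, x i = 0 := by
  have hright : (Q \ P).toRight = ∅ := by
    rw [toRight_sdiff, sdiff_eq_empty_iff_subset]
    exact (eq_of_subset_of_card_le (toRight_subset_toRight hPQ.1) hcard.ge).ge
  refine ⟨(Q \ P).toLeft, toLeft_subset_toLeft sdiff_subset, ?_, ?_⟩
  · have := card_toLeft_add_card_toRight (u := Q \ P)
    rw [hright, card_empty, add_zero] at this
    exact card_pos.1 (this ▸ card_pos.2 (sdiff_nonempty.2 hPQ.2))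
  · have := sum_sdiff_eq_sub hPQ.1 (f := Sum.elim x y)
    rwa [hsum, sub_self, sum_sum_eq_sum_toLeft_add_sum_toRight, hright, sum_empty,
      add_zero] at this

theorem exists_chain_abs_sum_le {ι κ : Type*} [DecidableEq ι] [Fintype κ] (z : ι → κ → ℤ)
    (A : Finset ι) (hz : ∀ a ∈ A, ∀ j, |z a j| ≤ 1) (h0 : ∑ a ∈ A, z a = 0) :
    ∃ P : ℕ → Finset ι, Monotone P ∧ (∀ m, P m ⊆ A) ∧ (∀ m ≤ #A, #(P m) = m) ∧
      ∀ m j, |∑ a ∈ P m, z a j| ≤ Fintype.card κ := by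
  obtain ⟨l, hl, hpre⟩ := exists_perm_norm_sum_take_le (fun a j => (z a j : ℝ)) A
    (fun a ha => (pi_norm_le_iff_of_nonneg zero_le_one).2 fun j => by
      simp only [Real.norm_eq_abs]
      exact_mod_cast hz a ha j)
    (funext fun j => by
      have := congrFun h0 j
      simp only [Finset.sum_apply, Pi.zero_apply] at this ⊢
      exact_mod_cast this)
  rw [finrank_fintype_fun_eq_card] at hpre
  have hnodup : ∀ m, (l.take m).Nodup := fun m =>
    (hl.nodup_iff.2 A.nodup_toList).sublist (List.take_sublist _ _)
  refine ⟨fun m => (l.take m).toFinset, fun m m' h a ha => ?_, fun m a ha => ?_, fun m hm => ?_,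
    fun m j => ?_⟩
  · exact List.mem_toFinset.2 ((List.take_prefix_take_left h).subset (List.mem_toFinset.1 ha))
  · exact mem_toList.1 (hl.subset (List.mem_of_mem_take (List.mem_toFinset.1 ha)))
  · rw [List.toFinset_card_of_nodup (hnodup m), List.length_take, hl.length_eq, length_toList]
    exact min_eq_left hm
  · have h := hpre m
    rw [← List.sum_toFinset _ (hnodup m)] at h
    have := (pi_norm_le_iff_of_nonneg (Nat.cast_nonneg _)).1 h j
    simp only [Finset.sum_apply, Real.norm_eq_abs] at this
    exact_mod_cast this

theorem exists_nonempty_subset_sum_eq_zero {ι κ : Type*} [DecidableEq ι] [Fintype κ] {M : ℕ}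
    (x : ι → κ → ℤ) (B : Finset ι) (hx : ∀ i ∈ B, ∀ j, |x i j| ≤ 1)
    (hs : ∀ j, |∑ i ∈ B, x i j| ≤ M)
    (hB : (M + 1) * (2 * Fintype.card κ + 1) ^ Fintype.card κ < #B + (M + 1)) :
    ∃ C ⊆ B, C.Nonempty ∧ ∑ i ∈ C, x i = 0 := by
  classical
  set d := Fintype.card κ
  obtain ⟨y, hy, hysum⟩ := exists_sum_eq_of_abs_le (M := M) (-∑ i ∈ B, x i)
    (by simpa [Finset.sum_apply] using hs)
  set A := B.disjSum (univ : Finset (Fin M))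
  obtain ⟨P, hPmono, hPA, hPcard, hPsum⟩ := exists_chain_abs_sum_le (Sum.elim x y) A
    (by
      rintro (i | m) ha j
      · exact hx i (by simpa [A] using ha) j
      · exact hy m j)
    (by simp only [A, sum_disjSum, Sum.elim_inl, Sum.elim_inr, hysum, add_neg_cancel])
  obtain ⟨m, hm, m', hm', hne, heq⟩ := exists_ne_map_eq_of_card_lt_of_maps_to
    (s := range (#A + 1)) (t := Fintype.piFinset (fun _ => Icc (-d : ℤ) d) ×ˢ range (M + 1))
    (f := fun m => (fun j => ∑ a ∈ P m, Sum.elim x y a j, #(P m).toRight))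
    (by
      have h2d : (d + 1 - -d : ℤ).toNat = 2 * d + 1 := by omega
      simp only [card_product, Fintype.card_piFinset, Int.card_Icc, h2d, prod_const, card_univ,
        card_range, A, card_disjSum, Fintype.card_fin]
      linarith)
    (fun m _ => by
      simp only [coe_product, Set.mem_prod, mem_coe, Fintype.mem_piFinset, mem_Icc, mem_range]
      exact ⟨fun j => abs_le.1 (hPsum m j),
        Nat.lt_succ_of_le ((card_le_univ _).trans_eq (Fintype.card_fin M))⟩)
  wlog hlt : m < m' generalizing m m'
  · exact this m' hm' m hm hne.symm heq.symm (by omega)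
  simp only [mem_range] at hm hm'
  obtain ⟨C, hC, hCne, hCsum⟩ := exists_nonempty_sum_eq_zero_of_ssubset x y
    (P := P m) (Q := P m')
    ⟨hPmono hlt.le, fun h => by
      have := card_le_card h
      rw [hPcard m (by omega), hPcard m' (by omega)] at this
      omega⟩
    (funext fun j => by simpa [Finset.sum_apply] using congrFun (congrArg Prod.fst heq) j)
    (congrArg Prod.snd heq)
  exact ⟨C, hC.trans (by simpa [A] using toLeft_subset_toLeft (hPA m')), hCne, hCsum⟩

theorem exists_subset_sum_eq_card_le {ι κ : Type*} [DecidableEq ι] [Fintype κ] {M : ℕ}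
    (x : ι → κ → ℤ) (A : Finset ι) (hx : ∀ i ∈ A, ∀ j, |x i j| ≤ 1)
    (hs : ∀ j, |∑ i ∈ A, x i j| ≤ M) :
    ∃ B ⊆ A, ∑ i ∈ B, x i = ∑ i ∈ A, x i ∧
      #B + (M + 1) ≤ (M + 1) * (2 * Fintype.card κ + 1) ^ Fintype.card κ := by
  obtain ⟨B, hB, hmin⟩ := exists_min_image
    (A.powerset.filter fun B => ∑ i ∈ B, x i = ∑ i ∈ A, x i) card ⟨A, by simp⟩
  obtain ⟨hBA, hBsum⟩ : B ⊆ A ∧ ∑ i ∈ B, x i = ∑ i ∈ A, x i := by simpa using hB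
  refine ⟨B, hBA, hBsum, not_lt.1 fun hlt => ?_⟩
  obtain ⟨C, hCB, hCne, hC0⟩ := exists_nonempty_subset_sum_eq_zero x B
    (fun i hi => hx i (hBA hi)) (fun j => by
      have := congrFun hBsum j
      simp only [Finset.sum_apply] at this
      exact this ▸ hs j) hlt
  have hle := hmin (B \ C) (mem_filter.2 ⟨mem_powerset.2 (sdiff_subset.trans hBA),
    by rw [sum_sdiff_eq_sub hCB, hC0, sub_zero, hBsum]⟩)
  rw [card_sdiff_of_subset hCB] at hle
  have := card_pos.2 hCne
  have := card_le_card hCB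
  omega

section InducedDegree

variable {α : Type*} (G : SimpleGraph α) [DecidableRel G.Adj]

lemma degIn_add_degIn_compl [Fintype α] [DecidableEq α] (s : Finset α) (v : α) :
    degIn G s v + degIn G sᶜ v = G.degree v := by
  rw [← G.card_neighborFinset_eq_degree, G.neighborFinset_eq_filter, degIn, degIn,
    ← card_union_of_disjoint (disjoint_filter_filter disjoint_compl_right), ← filter_union,
    union_compl]

lemma degIn_compl_eq_degIn_compl_iff [Fintype α] [DecidableEq α] (s : Finset α) (u v : α) :
    degIn G sᶜ u = degIn G sᶜ v ↔
      (degIn G s u : ℤ) - degIn G s v = G.degree u - G.degree v := by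
  have := degIn_add_degIn_compl G s u
  have := degIn_add_degIn_compl G s v
  omega

lemma degIn_eq_card_sub_one_of_isClique [DecidableEq α] {S : Finset α}
    (hS : G.IsClique (S : Set α)) {u : α} (hu : u ∈ S) : degIn G S u = #S - 1 := by
  rw [degIn, ← card_erase_of_mem hu]
  congr 1
  ext w
  simp only [mem_filter, mem_erase]
  exact ⟨fun ⟨hw, hadj⟩ => ⟨(G.ne_of_adj hadj).symm, hw⟩,
    fun ⟨hne, hw⟩ => ⟨hw, hS hu hw hne.symm⟩⟩

lemma degIn_eq_zero_of_isClique_compl {S : Finset α} (hS : Gᶜ.IsClique (S : Set α)) {u : α}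
    (hu : u ∈ S) : degIn G S u = 0 := by
  rw [degIn, card_eq_zero, filter_eq_empty_iff]
  exact fun w hw hadj => (hS hu hw (G.ne_of_adj hadj)).2 hadj

lemma degIn_compl_sub_degIn_compl_of_isClique_or [Fintype α] [DecidableEq α] {S : Finset α}
    (hS : G.IsClique (S : Set α) ∨ Gᶜ.IsClique (S : Set α)) {u v : α} (hu : u ∈ S) (hv : v ∈ S) :
    (degIn G Sᶜ u : ℤ) - degIn G Sᶜ v = G.degree u - G.degree v := by
  have hSS : degIn G S u = degIn G S v := hS.elim
    (fun h => by rw [degIn_eq_card_sub_one_of_isClique G h hu,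
      degIn_eq_card_sub_one_of_isClique G h hv])
    (fun h => by rw [degIn_eq_zero_of_isClique_compl G h hu,
      degIn_eq_zero_of_isClique_compl G h hv])
  have := degIn_add_degIn_compl G S u
  have := degIn_add_degIn_compl G S v
  omega

lemma sum_ite_adj_sub_ite_adj (W : Finset α) (u v : α) :
    ∑ w ∈ W, ((if G.Adj u w then 1 else 0 : ℤ) - if G.Adj v w then 1 else 0) =
      degIn G W u - degIn G W v := by
  simp [sum_sub_distrib, sum_boole, degIn]

end InducedDegree

/-- Let `S` be a set of `k` vertices of `G` inducing a clique or an independent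
set, with all pairwise degree differences within `S` at most `M`.  Then there
is a set `T` of at most `(M+2)(2k-1)^(k-1)` vertices disjoint from `S` such
that in the induced subgraph `H = G - T` all `k` vertices of `S` have the same
degree. -/
theorem stmt_15 (k M : ℕ) (hk : 0 < k) (G : SimpleGraph V) [DecidableRel G.Adj]
    (S : Finset V) (hS : S.card = k)
    (hcl : G.IsClique (S : Set V) ∨ Gᶜ.IsClique (S : Set V))
    (hM : ∀ u ∈ S, ∀ v ∈ S, (G.degree u : ℤ) - G.degree v ≤ M) :
    ∃ T : Finset V, Disjoint T S ∧ T.card ≤ (M + 2) * (2 * k - 1) ^ (k - 1) ∧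
      ∃ d : ℕ, ∀ v ∈ S, degIn G Tᶜ v = d := by
  obtain ⟨v₀, hv₀⟩ := card_pos.1 (hS ▸ hk)
  let x : V → S.erase v₀ → ℤ := fun w u =>
    (if G.Adj u w then 1 else 0) - if G.Adj v₀ w then 1 else 0
  have hx : ∀ (W : Finset V) (u : S.erase v₀),
      (∑ w ∈ W, x w) u = (degIn G W u : ℤ) - degIn G W v₀ := fun W u => by
    rw [Finset.sum_apply, sum_ite_adj_sub_ite_adj]
  have hdeg : ∀ u : S.erase v₀,
      (degIn G Sᶜ u : ℤ) - degIn G Sᶜ v₀ = G.degree u - G.degree v₀ := fun u =>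
    degIn_compl_sub_degIn_compl_of_isClique_or G hcl (mem_of_mem_erase u.2) hv₀
  obtain ⟨T, hTS, hTsum, hTcard⟩ := exists_subset_sum_eq_card_le (M := M) x Sᶜ
    (fun w _ u => by simp only [x]; split_ifs <;> simp)
    (fun u => by
      rw [← Finset.sum_apply, hx, hdeg, abs_le]
      have hu := mem_of_mem_erase u.2
      exact ⟨by linarith [hM v₀ hv₀ u hu], hM u hu v₀ hv₀⟩)
  have hk' : Fintype.card (S.erase v₀) = k - 1 := by
    rw [Fintype.card_coe, card_erase_of_mem hv₀, hS]
  refine ⟨T, disjoint_of_subset_left hTS disjoint_compl_left, ?_, degIn G Tᶜ v₀, fun u hu => ?_⟩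
  · rw [hk', show 2 * (k - 1) + 1 = 2 * k - 1 by omega] at hTcard
    nlinarith
  rcases eq_or_ne u v₀ with rfl | hne
  · rfl
  have hu' : u ∈ S.erase v₀ := mem_erase.2 ⟨hne, hu⟩
  have := congrFun hTsum ⟨u, hu'⟩
  rw [hx, hx, hdeg] at this
  exact (degIn_compl_eq_degIn_compl_iff G T u v₀).2 this
end
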